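/- Let K be a number field, let f : P^1 → P^1 be a rational map of degree d ≥ 2 defined over K, and let α ∈ P^1(K). If α is a post-critical point of f, then dim_upper(G_{f,α}) < 1. More precisely, if m ≥ 1 is a positive integer for which f^{−m}(α) contains a critical point of f, then dim_upper(G_{f,α}) ≤ 1 − d^{−m}. -/

import Mathlib

open scoped Classical

noncomputable section

/-! ### Minkowski dimension machinery for groups of automorphisms of rooted trees

A rooted tree is presented by its levels `V 0, V 1, V 2, …` (with `V 0` the root level)
together with parent maps `V (n+1) → V n`.  An automorphism is a family of permutations
of the levels commuting with the parent maps; it is in particular determined by a point of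
`∀ k, Equiv.Perm (V k)`.  The restriction `r_n σ` of `σ` to the height-`n` subtree is the
tuple `(σ 0, …, σ n)`, and the natural metric is
`d(σ,τ) = inf { d!^{-(dⁿ-1)/(d-1)} : r_n σ = r_n τ }`. -/

/-- The exponent `(dⁿ - 1)/(d - 1) = 1 + d + ⋯ + d^(n-1)`. -/
def scaleExp (d n : ℕ) : ℕ := ∑ i ∈ Finset.range n, d ^ i

/-- The scale `ε_n = d!^{-(dⁿ-1)/(d-1)}`, i.e. `1/|Aut(Tₙᶜᵒᵐ)|`. -/
def treeScale (d n : ℕ) : ℝ := ((d.factorial : ℝ) ^ scaleExp d n)⁻¹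

/-- Two families of level permutations restrict to the same automorphism of the
height-`n` subtree. -/
def AgreeUpTo {V : ℕ → Type*} (n : ℕ) (σ τ : ∀ k, Equiv.Perm (V k)) : Prop :=
  ∀ k, k ≤ n → σ k = τ k

/-- The natural metric on automorphisms of a rooted `d`-ary tree:
`d(σ,τ) = inf { d!^{-(dⁿ-1)/(d-1)} : σ and τ agree on the height-n subtree }`. -/
def treeDist {V : ℕ → Type*} (d : ℕ) (σ τ : ∀ k, Equiv.Perm (V k)) : ℝ :=
  sInf {x : ℝ | ∃ n : ℕ, AgreeUpTo n σ τ ∧ x = treeScale d n}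

/-- `N_{ε_n}(G)`: the least number of balls of radius `ε_n = treeScale d n` needed to
cover `G`. -/
def coverNum {V : ℕ → Type*} (d : ℕ) (G : Set (∀ k, Equiv.Perm (V k))) (n : ℕ) : ℕ :=
  sInf {m : ℕ | ∃ s : Finset (∀ k, Equiv.Perm (V k)), s.card = m ∧
    G ⊆ ⋃ σ ∈ s, {τ | treeDist d σ τ ≤ treeScale d n}}

/-- The lower Minkowski dimension `liminf_{ε → 0} log N_ε(G) / log (1/ε)` (computed
along the scales `ε_n` of the metric). -/
def dimLower {V : ℕ → Type*} (d : ℕ) (G : Set (∀ k, Equiv.Perm (V k))) : ℝ :=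
  Filter.liminf
    (fun n : ℕ => Real.log (coverNum d G n : ℝ) / Real.log (1 / treeScale d n)) Filter.atTop

/-- The upper Minkowski dimension `limsup_{ε → 0} log N_ε(G) / log (1/ε)` (computed
along the scales `ε_n` of the metric). -/
def dimUpper {V : ℕ → Type*} (d : ℕ) (G : Set (∀ k, Equiv.Perm (V k))) : ℝ :=
  Filter.limsup
    (fun n : ℕ => Real.log (coverNum d G n : ℝ) / Real.log (1 / treeScale d n)) Filter.atTop

/-- The Minkowski dimension of `G` exists and equals `x`. -/
def HasDim {V : ℕ → Type*} (d : ℕ) (G : Set (∀ k, Equiv.Perm (V k))) (x : ℝ) : Prop :=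
  dimLower d G = x ∧ dimUpper d G = x

/-- `G` is closed for the natural metric. -/
def IsDistClosed {V : ℕ → Type*} (d : ℕ) (G : Set (∀ k, Equiv.Perm (V k))) : Prop :=
  ∀ σ, (∀ ε : ℝ, 0 < ε → ∃ τ ∈ G, treeDist d σ τ ≤ ε) → σ ∈ G

/-- The closure of `G` for the natural metric. -/
def distClosure {V : ℕ → Type*} (d : ℕ) (G : Set (∀ k, Equiv.Perm (V k))) :
    Set (∀ k, Equiv.Perm (V k)) :=
  {σ | ∀ ε : ℝ, 0 < ε → ∃ τ ∈ G, treeDist d σ τ ≤ ε}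

/-- `|r_n(G)|`: the cardinality of the restriction of `G` to the height-`n` subtree. -/
def levelCard {V : ℕ → Type*} (G : Set (∀ k, Equiv.Perm (V k))) (n : ℕ) : ℕ :=
  Nat.card ((fun (σ : ∀ k, Equiv.Perm (V k)) (k : Fin (n + 1)) => σ k.1) '' G)

end
noncomputable section

/-- A fixed algebraic closure `K̄` of `K`. -/
abbrev Kbar (K : Type*) [Field K] : Type _ := AlgebraicClosure K

/-- The level-`n` vertices of the preimage tree of `α` under `φ`: the set
`φ^{-n}(α)`. -/
abbrev preV {Pts : Type*} (φ : Pts → Pts) (α : Pts) (n : ℕ) : Type _ :=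
  {β : Pts // φ^[n] β = α}

/-- The parent map of the preimage tree: a vertex `β ∈ φ^{-(n+1)}(α)` is joined to
`φ(β) ∈ φ^{-n}(α)`. -/
def preParent {Pts : Type*} (φ : Pts → Pts) (α : Pts) (n : ℕ)
    (β : preV φ α (n + 1)) : preV φ α n :=
  ⟨φ β.1, by have h := β.2; rwa [Function.iterate_succ_apply] at h⟩

/-- The image `G_{φ,α}` of the arboreal Galois representation attached to `(φ, α)` over
the base field `L` (an intermediate field of `K̄/K`): the set of families of level
permutations of the preimage tree induced by elements of `Gal(K̄/L)`, acting on points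
via `act`. -/
def arbGal {K : Type*} [Field K] {Pts : Type*}
    (act : (Kbar K ≃ₐ[K] Kbar K) → Pts → Pts) (L : IntermediateField K (Kbar K))
    (φ : Pts → Pts) (α : Pts) : Set (∀ n, Equiv.Perm (preV φ α n)) :=
  {g | ∃ σ : Kbar K ≃ₐ[K] Kbar K, (∀ x ∈ L, σ x = x) ∧
    ∀ (n : ℕ) (β : preV φ α n), (g n β : Pts) = act σ (β : Pts)}

end
noncomputable section

/-- The projective line `ℙ¹(L) = L ∪ {∞}`, with `none` the point at infinity. -/
abbrev P1 (L : Type*) := Option L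

/-- The action on `ℙ¹(A)` of the rational map `f = p/q` with coefficients in `K`,
for an extension field `A` of `K`.  At a finite point `x` the value is `p(x)/q(x)`
(`∞` when `q(x) = 0`), and the value at `∞` is governed by the degrees of `p` and
`q` and their leading coefficients. -/
def ratAct {K : Type*} [Field K] (p q : Polynomial K)
    (A : Type*) [Field A] [Algebra K A] : P1 A → P1 A
  | some x =>
      if Polynomial.aeval x q = 0 then none
      else some (Polynomial.aeval x p / Polynomial.aeval x q)
  | none =>
      if q.natDegree < p.natDegree then none
      else if p.natDegree < q.natDegree then some 0
      else some (algebraMap K A (p.leadingCoeff / q.leadingCoeff))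

/-- The natural action of `Gal(K̄/K)` on `ℙ¹(K̄)`. -/
def galP1 {K : Type*} [Field K] (σ : Kbar K ≃ₐ[K] Kbar K) : P1 (Kbar K) → P1 (Kbar K) :=
  Option.map σ

/-- The inclusion `ℙ¹(K) ⊆ ℙ¹(K̄)`. -/
def P1K {K : Type*} [Field K] : P1 K → P1 (Kbar K) :=
  Option.map (algebraMap K (Kbar K))

/-- The set of `L`-rational points of `ℙ¹(K̄)`, for an intermediate field `L` of
`K̄/K`. -/
def P1Rat {K : Type*} [Field K] (L : IntermediateField K (Kbar K)) : Set (P1 (Kbar K)) :=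
  {β | β = none ∨ ∃ x ∈ L, β = some x}

/-- The Möbius transformation of `ℙ¹(F)` attached to `(a b; c e) ∈ PGL₂(F)`. -/
def moebius {F : Type*} [Field F] (a b c e : F) : P1 F → P1 F
  | some x => if c * x + e = 0 then none else some ((a * x + b) / (c * x + e))
  | none => if c = 0 then none else some (a / c)

/-- The normalizing constant `C_D = log(D!)/(D-1)`. -/
def Cconst (D : ℕ) : ℝ := Real.log (D.factorial : ℝ) / ((D : ℝ) - 1)

/-- The ramification multiplicity at a point `γ ∈ ℙ¹(A)` of the degree-`d` rational
map `f = p/q` with coefficients in `K ⊆ A`:  at a finite point `γ` with `f(γ) = c`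
finite it is the order of vanishing of `p - c·q` at `γ`; the cases involving `∞` are
handled using `q` and degrees.  A point is critical when this is at least `2`. -/
def multAt {K : Type*} [Field K] (p q : Polynomial K)
    (A : Type*) [Field A] [Algebra K A] (d : ℕ) : P1 A → ℕ
  | some x =>
      match ratAct p q A (some x) with
      | some c => ((p.map (algebraMap K A)) -
          Polynomial.C c * (q.map (algebraMap K A))).rootMultiplicity x
      | none => (q.map (algebraMap K A)).rootMultiplicity x
  | none =>
      match ratAct p q A none with
      | some c => d - ((p.map (algebraMap K A)) -
          Polynomial.C c * (q.map (algebraMap K A))).natDegree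
      | none => d - q.natDegree

end

/-!
Only the tree structure of `G_{f,α}` matters. An element of `G` restricted to height `n + 1` is
determined by its restriction to height `n` together with, for every vertex `v` of level `n`, a
bijection from the children of `v` onto those of its image; hence
`|r_{n+1}(G)| ≤ |r_n(G)| · ∏_v c_v!`, where `c_v ∈ [1, d]` is the number of children of `v`.
Since `c! ^ (d - 1) ≤ d! ^ (c - 1)`, this gives `log |r_n(G)| ≤ (N_n - 1)/(d - 1) · log d!` with
`N_n = |f^{-n}(α)|`, whereas `log (1/ε_n) = (dⁿ - 1)/(d - 1) · log d!`. If `f^{-m}(α)` contains a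
critical point `γ`, the vertex `f(γ)` of level `m - 1` has fewer than `d` children, so
`N_n ≤ dⁿ - d^(n - m)` for `n ≥ m`, and the ratio of the two logarithms is at most `1 - d^(-m)`.
-/

open scoped Nat

theorem Nat.factorial_pow_sub_one_mul_factorial_le {c d : ℕ} (hc : 1 ≤ c) (hcd : c ≤ d) :
    c ! ^ (d - 1) * d ! ≤ d ! ^ c := by
  obtain ⟨t, rfl⟩ := Nat.exists_eq_add_of_le hcd
  have hc_fact : c ! ≤ (c + 1) ^ (c - 1) := by
    calc c ! = (c - (c - 1))! * c.descFactorial (c - 1) := by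
          rw [Nat.factorial_mul_descFactorial (by omega)]
      _ = c.descFactorial (c - 1) := by rw [show c - (c - 1) = 1 by omega]; simp
      _ ≤ c ^ (c - 1) := Nat.descFactorial_le_pow c (c - 1)
      _ ≤ (c + 1) ^ (c - 1) := Nat.pow_le_pow_left (by omega) _
  calc c ! ^ (c + t - 1) * (c + t)! = c ! ^ (c - 1) * c ! ^ t * (c + t)! := by
        rw [← pow_add, show c - 1 + t = c + t - 1 by omega]
    _ ≤ c ! ^ (c - 1) * ((c + 1) ^ (c - 1)) ^ t * (c + t)! := by gcongr
    _ = (c ! * (c + 1) ^ t) ^ (c - 1) * (c + t)! := by ring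
    _ ≤ (c + t)! ^ (c - 1) * (c + t)! := by gcongr; exact Nat.factorial_mul_pow_le_factorial
    _ = (c + t)! ^ c := by rw [← pow_succ, Nat.sub_add_cancel hc]

theorem Equiv.Perm.card_lifts_le {X Y : Type*} [Fintype X] [Fintype Y] (π : X → Y)
    (τ : Equiv.Perm Y) :
    Nat.card {σ : Equiv.Perm X // ∀ x, π (σ x) = τ (π x)} ≤
      ∏ y, (Nat.card {x // π x = y})! := by
  rcases isEmpty_or_nonempty {σ : Equiv.Perm X // ∀ x, π (σ x) = τ (π x)} with h | ⟨σ₀, hσ₀⟩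
  · simp
  -- Two lifts of `τ` differ by a permutation preserving the fibers of `π`.
  let toStab (σ : {σ : Equiv.Perm X // ∀ x, π (σ x) = τ (π x)}) :
      {g : Equiv.Perm X // π ∘ g = π} :=
    ⟨σ₀⁻¹ * σ, funext fun x => τ.injective <| by
      simpa [← hσ₀] using σ.2 x⟩
  have h_inj : Function.Injective toStab := fun σ σ' h =>
    Subtype.ext (mul_left_cancel (congrArg Subtype.val h))
  calc _ ≤ Nat.card {g : Equiv.Perm X // π ∘ g = π} := Nat.card_le_card_of_injective _ h_inj
    _ = ∏ y, (Nat.card {x // π x = y})! := by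
      simp only [Nat.card_eq_fintype_card, DomMulAct.stabilizer_card]

section RootedTree

variable {V : ℕ → Type*} (par : ∀ n, V (n + 1) → V n)

/-- Automorphisms of the rooted tree with levels `V n` and parent maps `par n`. -/
def IsTreeAut (g : ∀ n, Equiv.Perm (V n)) : Prop :=
  ∀ n w, par n (g (n + 1) w) = g n (par n w)

theorem finite_level [Finite (V 0)] [∀ n (v : V n), Finite {w // par n w = v}] :
    ∀ n, Finite (V n)
  | 0 => inferInstance
  | n + 1 =>
    have := finite_level n
    Finite.of_equiv _ (Equiv.sigmaFiberEquiv (par n))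

theorem nonempty_level [Nonempty (V 0)] (hfib : ∀ n (v : V n), Nonempty {w // par n w = v}) :
    ∀ n, Nonempty (V n)
  | 0 => inferInstance
  | n + 1 =>
    let ⟨v⟩ := nonempty_level hfib n
    let ⟨w⟩ := hfib n v
    ⟨w.1⟩

theorem card_level_succ (n : ℕ) [Fintype (V n)] [∀ v : V n, Finite {w // par n w = v}] :
    Nat.card (V (n + 1)) = ∑ v : V n, Nat.card {w // par n w = v} := by
  rw [← Nat.card_congr (Equiv.sigmaFiberEquiv (par n)), Nat.card_sigma]

variable {par} {d : ℕ}

theorem card_level_succ_le (hle : ∀ n (v : V n), Nat.card {w // par n w = v} ≤ d) (n : ℕ)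
    [Finite (V n)] [∀ v : V n, Finite {w // par n w = v}] :
    Nat.card (V (n + 1)) ≤ d * Nat.card (V n) := by
  have := Fintype.ofFinite (V n)
  calc Nat.card (V (n + 1)) = ∑ v : V n, Nat.card {w // par n w = v} := card_level_succ par n
    _ ≤ ∑ _v : V n, d := Finset.sum_le_sum fun v _ => hle n v
    _ = d * Nat.card (V n) := by simp [mul_comm]

theorem card_level_succ_lt (hle : ∀ n (v : V n), Nat.card {w // par n w = v} ≤ d) {n : ℕ}
    [Finite (V n)] [∀ v : V n, Finite {w // par n w = v}] (v : V n)
    (hv : Nat.card {w // par n w = v} < d) :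
    Nat.card (V (n + 1)) < d * Nat.card (V n) := by
  have := Fintype.ofFinite (V n)
  calc Nat.card (V (n + 1)) = ∑ u : V n, Nat.card {w // par n w = u} := card_level_succ par n
    _ < ∑ _u : V n, d :=
      Finset.sum_lt_sum (fun u _ => hle n u) ⟨v, Finset.mem_univ v, hv⟩
    _ = d * Nat.card (V n) := by simp [mul_comm]

theorem card_level_le_pow (h0 : Nat.card (V 0) = 1)
    (hle : ∀ n (v : V n), Nat.card {w // par n w = v} ≤ d) [∀ n, Finite (V n)]
    [∀ n (v : V n), Finite {w // par n w = v}] (n : ℕ) :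
    Nat.card (V n) ≤ d ^ n := by
  induction n with
  | zero => simp [h0]
  | succ n ih =>
    calc Nat.card (V (n + 1)) ≤ d * Nat.card (V n) := card_level_succ_le hle n
      _ ≤ d * d ^ n := Nat.mul_le_mul_left d ih
      _ = d ^ (n + 1) := by ring

theorem card_level_add_pow_le (h0 : Nat.card (V 0) = 1)
    (hle : ∀ n (v : V n), Nat.card {w // par n w = v} ≤ d) [∀ n, Finite (V n)]
    [∀ n (v : V n), Finite {w // par n w = v}] {k : ℕ} (v : V k)
    (hv : Nat.card {w // par k w = v} < d) (j : ℕ) :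
    Nat.card (V (k + 1 + j)) + d ^ j ≤ d ^ (k + 1 + j) := by
  induction j with
  | zero =>
    calc Nat.card (V (k + 1)) + 1 ≤ d * Nat.card (V k) := card_level_succ_lt hle v hv
      _ ≤ d * d ^ k := Nat.mul_le_mul_left d (card_level_le_pow h0 hle k)
      _ = d ^ (k + 1) := by ring
  | succ j ih =>
    calc Nat.card (V (k + 1 + j + 1)) + d ^ (j + 1)
        ≤ d * Nat.card (V (k + 1 + j)) + d * d ^ j := by
          rw [pow_succ']; exact Nat.add_le_add_right (card_level_succ_le hle _) _
      _ = d * (Nat.card (V (k + 1 + j)) + d ^ j) := by ring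
      _ ≤ d * d ^ (k + 1 + j) := Nat.mul_le_mul_left d ih
      _ = d ^ (k + 1 + j + 1) := by ring

end RootedTree

section TreeAut

variable {V : ℕ → Type*} {par : ∀ n, V (n + 1) → V n} {G : Set (∀ n, Equiv.Perm (V n))}

theorem levelCard_succ_le (hG : ∀ g ∈ G, IsTreeAut par g) (n : ℕ) [∀ k, Finite (V k)]
    [Fintype (V n)] :
    levelCard G (n + 1) ≤ levelCard G n * ∏ v : V n, (Nat.card {w // par n w = v})! := by
  set R := fun m => (fun (σ : ∀ k, Equiv.Perm (V k)) (k : Fin (m + 1)) => σ k.1) '' G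
  have := Fintype.ofFinite (R n)
  have := Fintype.ofFinite (V (n + 1))
  -- A restriction to height `n + 1` is its restriction to height `n` together with a lift of
  -- the permutation of level `n` to level `n + 1`.
  let IsLift (t : R n) (π : Equiv.Perm (V (n + 1))) : Prop :=
    ∀ w, par n (π w) = t.1 (Fin.last n) (par n w)
  have h_split : ∀ r ∈ R (n + 1), ∃ ht : (fun k : Fin (n + 1) => r k.castSucc) ∈ R n,
      IsLift ⟨_, ht⟩ (r (Fin.last (n + 1))) := by
    rintro r ⟨g, hg, rfl⟩
    exact ⟨⟨g, hg, rfl⟩, hG g hg n⟩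
  let split (r : R (n + 1)) : {x : R n × Equiv.Perm (V (n + 1)) // IsLift x.1 x.2} :=
    ⟨(⟨_, (h_split r.1 r.2).1⟩, r.1 (Fin.last (n + 1))), (h_split r.1 r.2).2⟩
  have h_inj : Function.Injective split := by
    intro r r' h
    simp only [split, Subtype.mk.injEq, Prod.mk.injEq] at h
    apply Subtype.ext
    funext k
    refine Fin.lastCases ?_ (fun i => ?_) k
    · exact h.2
    · exact congrFun h.1 i
  calc levelCard G (n + 1) ≤ Nat.card {x : R n × Equiv.Perm (V (n + 1)) // IsLift x.1 x.2} :=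
        Nat.card_le_card_of_injective split h_inj
    _ = ∑ t : R n, Nat.card {π // IsLift t π} := by
      rw [Nat.card_congr (Equiv.subtypeProdEquivSigmaSubtype IsLift), Nat.card_sigma]
    _ ≤ ∑ _t : R n, ∏ v : V n, (Nat.card {w // par n w = v})! :=
      Finset.sum_le_sum fun t _ => Equiv.Perm.card_lifts_le (par n) (t.1 (Fin.last n))
    _ = levelCard G n * ∏ v : V n, (Nat.card {w // par n w = v})! := by
      rw [Finset.sum_const, Finset.card_univ, smul_eq_mul, levelCard, Nat.card_eq_fintype_card]

variable {d : ℕ}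

theorem levelCard_pow_mul_factorial_le (hG : ∀ g ∈ G, IsTreeAut par g) (h0 : Nat.card (V 0) = 1)
    (hpos : ∀ n (v : V n), 0 < Nat.card {w // par n w = v})
    (hle : ∀ n (v : V n), Nat.card {w // par n w = v} ≤ d) [∀ k, Finite (V k)] (n : ℕ) :
    levelCard G n ^ (d - 1) * d ! ≤ d ! ^ Nat.card (V n) := by
  have := fun n (v : V n) => Nat.finite_of_card_ne_zero (hpos n v).ne'
  induction n with
  | zero =>
    have h_one : levelCard G 0 ≤ 1 := by
      calc levelCard G 0 ≤ Nat.card (∀ k : Fin 1, Equiv.Perm (V k)) := Finite.card_subtype_le _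
        _ = 1 := by simp [Nat.card_pi, Nat.card_perm, h0]
    calc levelCard G 0 ^ (d - 1) * d ! ≤ 1 ^ (d - 1) * d ! := by gcongr
      _ = d ! ^ Nat.card (V 0) := by simp [h0]
  | succ n ih =>
    have := Fintype.ofFinite (V n)
    set E := ∏ v : V n, (Nat.card {w // par n w = v})!
    calc levelCard G (n + 1) ^ (d - 1) * d !
        ≤ (levelCard G n * E) ^ (d - 1) * d ! := by gcongr; exact levelCard_succ_le hG n
      _ = (levelCard G n ^ (d - 1) * d !) * E ^ (d - 1) := by ring
      _ ≤ d ! ^ Nat.card (V n) * E ^ (d - 1) := by gcongr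
      _ = ∏ v : V n, d ! * (Nat.card {w // par n w = v})! ^ (d - 1) := by
        rw [Finset.prod_mul_distrib, Finset.prod_const, Finset.card_univ,
          ← Nat.card_eq_fintype_card, Finset.prod_pow]
      _ ≤ ∏ v : V n, d ! ^ Nat.card {w // par n w = v} := by
        gcongr with v
        rw [mul_comm]
        exact Nat.factorial_pow_sub_one_mul_factorial_le (hpos n v) (hle n v)
      _ = d ! ^ Nat.card (V (n + 1)) := by rw [Finset.prod_pow_eq_pow_sum, card_level_succ par]

end TreeAut

section Dimension

variable {V : ℕ → Type*} {d : ℕ}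

theorem treeScale_pos (d n : ℕ) : 0 < treeScale d n := by
  unfold treeScale
  positivity

theorem treeDist_le_treeScale {n : ℕ} {σ τ : ∀ k, Equiv.Perm (V k)} (h : AgreeUpTo n σ τ) :
    treeDist d σ τ ≤ treeScale d n :=
  csInf_le ⟨0, by rintro x ⟨k, -, rfl⟩; exact (treeScale_pos d k).le⟩ ⟨n, h, rfl⟩

theorem coverNum_le_levelCard [∀ k, Finite (V k)] (G : Set (∀ k, Equiv.Perm (V k))) (n : ℕ) :
    coverNum d G n ≤ levelCard G n := by
  set R := (fun (σ : ∀ k, Equiv.Perm (V k)) (k : Fin (n + 1)) => σ k.1) '' G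
  have := Fintype.ofFinite R
  choose lift hlift_mem hlift using fun r : R => r.2
  have h_cover : G ⊆ ⋃ σ ∈ Finset.univ.image lift, {τ | treeDist d σ τ ≤ treeScale d n} := by
    intro τ hτ
    let r : R := ⟨_, τ, hτ, rfl⟩
    refine Set.mem_biUnion (Finset.mem_image_of_mem lift (Finset.mem_univ r)) ?_
    exact treeDist_le_treeScale fun k hk => congrFun (hlift r) ⟨k, Nat.lt_succ_of_le hk⟩
  calc coverNum d G n ≤ (Finset.univ.image lift).card := Nat.sInf_le ⟨_, rfl, h_cover⟩
    _ ≤ Finset.univ.card := Finset.card_image_le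
    _ = levelCard G n := by rw [Finset.card_univ, levelCard, Nat.card_eq_fintype_card]

theorem log_one_div_treeScale (d n : ℕ) :
    Real.log (1 / treeScale d n) = scaleExp d n * Real.log d ! := by
  rw [treeScale, one_div, inv_inv, Real.log_pow]

theorem sub_one_mul_scaleExp (d n : ℕ) : ((d : ℝ) - 1) * scaleExp d n = (d : ℝ) ^ n - 1 := by
  rw [scaleExp, Nat.cast_sum, mul_comm]
  push_cast
  exact geom_sum_mul (d : ℝ) n

theorem dimUpper_le_of_eventually_le (hd : 2 ≤ d) (G : Set (∀ k, Equiv.Perm (V k))) {c : ℝ}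
    (h : ∀ᶠ n in Filter.atTop,
      Real.log (coverNum d G n) ≤ c * Real.log (1 / treeScale d n)) :
    dimUpper d G ≤ c := by
  have h_log_fact : 0 < Real.log d ! :=
    Real.log_pos (by exact_mod_cast (Nat.one_lt_two.trans_le (Nat.factorial_le hd)))
  have h_nonneg (n : ℕ) :
      0 ≤ Real.log (coverNum d G n) / Real.log (1 / treeScale d n) := by
    rw [log_one_div_treeScale]
    exact div_nonneg (Real.log_natCast_nonneg _) (by positivity)
  refine Filter.limsup_le_of_le (Filter.isCoboundedUnder_le_of_le _ h_nonneg) ?_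
  filter_upwards [h, Filter.eventually_ge_atTop 1] with n hn hn1
  have h_scale : 0 < (scaleExp d n : ℝ) := by
    exact_mod_cast Finset.sum_pos (fun i _ => pow_pos (by omega) i) ⟨0, by simp; omega⟩
  rw [div_le_iff₀ (by rw [log_one_div_treeScale]; exact mul_pos h_scale h_log_fact)]
  exact hn

end Dimension

section TreeDimension

variable {V : ℕ → Type*} {par : ∀ n, V (n + 1) → V n} {G : Set (∀ n, Equiv.Perm (V n))}
  {d : ℕ}

theorem sub_one_mul_log_coverNum_le (hd : 1 ≤ d) (hG : ∀ g ∈ G, IsTreeAut par g)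
    (h0 : Nat.card (V 0) = 1) (hpos : ∀ n (v : V n), 0 < Nat.card {w // par n w = v})
    (hle : ∀ n (v : V n), Nat.card {w // par n w = v} ≤ d) [∀ k, Finite (V k)] (n : ℕ) :
    ((d : ℝ) - 1) * Real.log (coverNum d G n) ≤ ((Nat.card (V n) : ℝ) - 1) * Real.log d ! := by
  have : Nonempty (V 0) := (Nat.card_pos_iff.mp (by omega)).1
  have := nonempty_level par fun n v => (Nat.card_pos_iff.mp (hpos n v)).1
  have h_card : 1 ≤ Nat.card (V n) := Nat.card_pos
  rcases Nat.eq_zero_or_pos (coverNum d G n) with h | h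
  · rw [h, Nat.cast_zero, Real.log_zero, mul_zero]
    have : (1 : ℝ) ≤ Nat.card (V n) := by exact_mod_cast h_card
    exact mul_nonneg (by linarith) (Real.log_natCast_nonneg _)
  have h_nat : coverNum d G n ^ (d - 1) * d ! ≤ d ! ^ Nat.card (V n) :=
    (Nat.mul_le_mul_right _ (Nat.pow_le_pow_left (coverNum_le_levelCard G n) _)).trans
      (levelCard_pow_mul_factorial_le hG h0 hpos hle n)
  have h_real : ((coverNum d G n : ℝ) ^ (d - 1) * d !) ≤ (d ! : ℝ) ^ Nat.card (V n) := by
    exact_mod_cast h_nat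
  have h_log := Real.log_le_log (by positivity) h_real
  rw [Real.log_mul (by positivity) (by positivity), Real.log_pow, Real.log_pow,
    Nat.cast_sub hd, Nat.cast_one] at h_log
  linarith

theorem dimUpper_le_one_sub_inv_pow (hd : 2 ≤ d) (hG : ∀ g ∈ G, IsTreeAut par g)
    (h0 : Nat.card (V 0) = 1) (hpos : ∀ n (v : V n), 0 < Nat.card {w // par n w = v})
    (hle : ∀ n (v : V n), Nat.card {w // par n w = v} ≤ d) {k : ℕ} (v : V k)
    (hv : Nat.card {w // par k w = v} < d) :
    dimUpper d G ≤ 1 - ((d : ℝ) ^ (k + 1))⁻¹ := by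
  have := fun n (v : V n) => (Nat.card_pos_iff.mp (hpos n v)).2
  have : Finite (V 0) := (Nat.card_pos_iff.mp (by omega)).2
  have := finite_level par
  apply dimUpper_le_of_eventually_le hd
  filter_upwards [Filter.eventually_ge_atTop (k + 1)] with n hn
  obtain ⟨j, rfl⟩ := Nat.exists_eq_add_of_le hn
  have hd_pos : (0 : ℝ) < d - 1 := by
    have : (2 : ℝ) ≤ d := by exact_mod_cast hd
    linarith
  have h_missing : (Nat.card (V (k + 1 + j)) : ℝ) + (d : ℝ) ^ j ≤ (d : ℝ) ^ (k + 1 + j) := by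
    exact_mod_cast card_level_add_pow_le h0 hle v hv j
  -- `(1 - d^(-(k+1))) (d^(k+1+j) - 1) = d^(k+1+j) - d^j - 1 + d^(-(k+1))`
  have h_card : (Nat.card (V (k + 1 + j)) : ℝ) - 1 ≤
      (1 - ((d : ℝ) ^ (k + 1))⁻¹) * ((d : ℝ) ^ (k + 1 + j) - 1) := by
    have h_pow : ((d : ℝ) ^ (k + 1))⁻¹ * (d : ℝ) ^ (k + 1 + j) = (d : ℝ) ^ j := by
      rw [pow_add (d : ℝ) (k + 1), inv_mul_cancel_left₀ (by positivity)]
    have : 0 ≤ ((d : ℝ) ^ (k + 1))⁻¹ := by positivity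
    nlinarith
  refine le_of_mul_le_mul_left ?_ hd_pos
  calc ((d : ℝ) - 1) * Real.log (coverNum d G (k + 1 + j))
      ≤ ((Nat.card (V (k + 1 + j)) : ℝ) - 1) * Real.log d ! :=
        sub_one_mul_log_coverNum_le (by omega) hG h0 hpos hle _
    _ ≤ (1 - ((d : ℝ) ^ (k + 1))⁻¹) * ((d : ℝ) ^ (k + 1 + j) - 1) * Real.log d ! := by
        gcongr
    _ = ((d : ℝ) - 1) * ((1 - ((d : ℝ) ^ (k + 1))⁻¹) * Real.log (1 / treeScale d (k + 1 + j))) := by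
        rw [log_one_div_treeScale, ← sub_one_mul_scaleExp]
        ring

end TreeDimension

section PreimageTree

variable {A : Type*} (f : A → A) (α : A)

theorem card_preV_zero : Nat.card (preV f α 0) = 1 :=
  Nat.card_unique (α := {β // β = α})

def preParentFiberEquiv (n : ℕ) (v : preV f α n) :
    {w // preParent f α n w = v} ≃ {x // f x = v.1} where
  toFun w := ⟨w.1.1, congrArg Subtype.val w.2⟩
  invFun x := ⟨⟨x.1, by rw [Function.iterate_succ_apply, x.2, v.2]⟩, Subtype.ext x.2⟩
  left_inv _ := rfl
  right_inv _ := rfl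

theorem card_fiber_preParent (n : ℕ) (v : preV f α n) :
    Nat.card {w // preParent f α n w = v} = Nat.card {x // f x = v.1} :=
  Nat.card_congr (preParentFiberEquiv f α n v)

theorem isTreeAut_of_mem_arbGal {K : Type*} [Field K] {act : (Kbar K ≃ₐ[K] Kbar K) → A → A}
    {L : IntermediateField K (Kbar K)} (hact : ∀ σ x, act σ (f x) = f (act σ x))
    {g : ∀ n, Equiv.Perm (preV f α n)} (hg : g ∈ arbGal act L f α) :
    IsTreeAut (preParent f α) g := by
  obtain ⟨σ, -, hσ⟩ := hg
  intro n w
  apply Subtype.ext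
  simp only [preParent, hσ, hact]

theorem dimUpper_preimageTree_le {d : ℕ} (hd : 2 ≤ d) {G : Set (∀ n, Equiv.Perm (preV f α n))}
    (hG : ∀ g ∈ G, IsTreeAut (preParent f α) g) (hpos : ∀ y, 0 < Nat.card {x // f x = y})
    (hle : ∀ y, Nat.card {x // f x = y} ≤ d) {k : ℕ} {γ : A} (hγ : f^[k + 1] γ = α)
    (hcrit : Nat.card {x // f x = f γ} < d) :
    dimUpper d G ≤ 1 - ((d : ℝ) ^ (k + 1))⁻¹ := by
  refine dimUpper_le_one_sub_inv_pow hd hG (card_preV_zero f α)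
    (fun n v => (card_fiber_preParent f α n v).symm ▸ hpos v.1)
    (fun n v => (card_fiber_preParent f α n v).symm ▸ hle v.1)
    (⟨f γ, by rwa [← Function.iterate_succ_apply]⟩ : preV f α k) ?_
  rwa [card_fiber_preParent]

end PreimageTree

section RationalMap

variable {K : Type*} [Field K] {p q : Polynomial K} {L : Type*} [Field L] [Algebra K L]
  {d : ℕ}

open Polynomial

/-- The polynomial whose roots are the finite points of the fibre of `ratAct p q L` over `y`. -/
noncomputable def fibPoly (p q : K[X]) (L : Type*) [Field L] [Algebra K L] : P1 L → L[X]
  | some c => p.map (algebraMap K L) - C c * q.map (algebraMap K L)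
  | none => q.map (algebraMap K L)

theorem ratAct_some_eq_iff (hf : IsCoprime p q) {x : L} {y : P1 L} :
    ratAct p q L (some x) = y ↔ (fibPoly p q L y).IsRoot x := by
  have h_coprime : aeval x q = 0 → aeval x p ≠ 0 := fun hq hp => by
    obtain ⟨u, v, huv⟩ := hf
    simpa [hp, hq] using congrArg (aeval x) huv
  cases y with
  | none => simp [ratAct, fibPoly, eval_map_algebraMap]
  | some c =>
    simp only [ratAct, fibPoly, IsRoot, eval_sub, eval_mul, eval_C, eval_map_algebraMap]
    by_cases hq : aeval x q = 0
    · simp [hq, h_coprime hq]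
    · simp [hq, div_eq_iff hq, sub_eq_zero]

theorem Polynomial.coeff_ne_zero_of_natDegree_eq {r : K[X]} (hr : r.natDegree = d) (hd : 1 ≤ d) :
    r.coeff d ≠ 0 := by
  rw [← hr, coeff_natDegree, leadingCoeff_ne_zero]
  rintro rfl
  simp at hr
  omega

theorem ratAct_none (hdeg : max p.natDegree q.natDegree = d) (hd : 1 ≤ d) :
    ratAct p q L none =
      if q.coeff d = 0 then none else some (algebraMap K L (p.coeff d / q.coeff d)) := by
  simp only [ratAct]
  by_cases h_qp : q.natDegree < p.natDegree
  · rw [if_pos h_qp, if_pos (coeff_eq_zero_of_natDegree_lt (by omega))]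
  have hq : q.natDegree = d := by omega
  rw [if_neg h_qp, if_neg (coeff_ne_zero_of_natDegree_eq hq hd), ← hq]
  by_cases h_pq : p.natDegree < q.natDegree
  · rw [if_pos h_pq, coeff_eq_zero_of_natDegree_lt h_pq]
    simp
  · rw [if_neg h_pq, leadingCoeff, leadingCoeff, show p.natDegree = q.natDegree by omega]

theorem ratAct_none_eq_iff (hdeg : max p.natDegree q.natDegree = d) (hd : 1 ≤ d) {y : P1 L} :
    ratAct p q L none = y ↔ (fibPoly p q L y).coeff d = 0 := by
  rw [ratAct_none hdeg hd]
  cases y with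
  | none => simp [fibPoly]
  | some c =>
    by_cases hq : q.coeff d = 0
    · have : q.natDegree ≠ d := fun h => coeff_ne_zero_of_natDegree_eq h hd hq
      have hp : p.coeff d ≠ 0 := coeff_ne_zero_of_natDegree_eq (by omega) hd
      simp [fibPoly, hq, hp]
    · have : algebraMap K L (q.coeff d) ≠ 0 := by simpa using hq
      simp only [fibPoly, hq, if_false, Option.some.injEq, coeff_sub, coeff_C_mul, coeff_map,
        sub_eq_zero, map_div₀, div_eq_iff this]

theorem fibPoly_ne_zero (hf : IsCoprime p q) (hdeg : max p.natDegree q.natDegree = d)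
    (hd : 1 ≤ d) (y : P1 L) : fibPoly p q L y ≠ 0 := by
  suffices p.natDegree = 0 ∧ q.natDegree = 0 → False by
    intro h
    apply this
    cases y with
    | none =>
      obtain rfl : q = 0 := by simpa [fibPoly] using h
      rw [isCoprime_zero_right] at hf
      exact ⟨natDegree_eq_zero_of_isUnit hf, natDegree_zero⟩
    | some c =>
      rw [fibPoly, sub_eq_zero] at h
      have hf' := hf.map (mapRingHom (algebraMap K L))
      rw [coe_mapRingHom, h] at hf'
      have hq := natDegree_eq_zero_of_isUnit (isCoprime_self.mp hf'.of_mul_left_right)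
      rw [natDegree_map] at hq
      refine ⟨?_, hq⟩
      rw [← natDegree_map (algebraMap K L), h]
      exact Nat.le_zero.mp ((natDegree_C_mul_le _ _).trans (by rw [natDegree_map, hq]))
  omega

theorem natDegree_fibPoly_le (hdeg : max p.natDegree q.natDegree = d) (y : P1 L) :
    (fibPoly p q L y).natDegree ≤ d := by
  cases y with
  | none => rw [fibPoly, natDegree_map]; omega
  | some c =>
    refine (natDegree_sub_le _ _).trans ?_
    rw [natDegree_map, ← hdeg]
    exact max_le_max le_rfl ((natDegree_C_mul_le _ _).trans (natDegree_map _).le)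

/-- The `if` term counts `∞`, which lies over `y` exactly when `fibPoly p q L y` has degree `< d`. -/
theorem card_fiber_ratAct (hf : IsCoprime p q) (hdeg : max p.natDegree q.natDegree = d)
    (hd : 1 ≤ d) (y : P1 L) :
    Nat.card {x // ratAct p q L x = y} =
      (fibPoly p q L y).roots.toFinset.card + if (fibPoly p q L y).coeff d = 0 then 1 else 0 := by
  set R := (fibPoly p q L y).roots.toFinset
  let S : Finset (P1 L) := if (fibPoly p q L y).coeff d = 0 then R.insertNone else R.map .some
  have h_mem (x : P1 L) : x ∈ S ↔ ratAct p q L x = y := by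
    by_cases h : (fibPoly p q L y).coeff d = 0 <;>
    cases x <;> simp [S, R, h, ratAct_none_eq_iff hdeg hd, ratAct_some_eq_iff hf,
      fibPoly_ne_zero hf hdeg hd]
  rw [← Nat.card_congr (Equiv.subtypeEquivRight h_mem), Nat.card_eq_finsetCard]
  by_cases h : (fibPoly p q L y).coeff d = 0 <;> simp [S, h, Finset.card_insertNone]

theorem natDegree_fibPoly_lt (hf : IsCoprime p q) (hdeg : max p.natDegree q.natDegree = d)
    (hd : 1 ≤ d) {y : P1 L} (hy : (fibPoly p q L y).coeff d = 0) :
    (fibPoly p q L y).natDegree < d := by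
  refine (natDegree_fibPoly_le hdeg y).lt_of_ne fun h => ?_
  rw [← h, coeff_natDegree, leadingCoeff_eq_zero] at hy
  exact fibPoly_ne_zero hf hdeg hd y hy

theorem Polynomial.card_roots_toFinset_lt_natDegree {R : L[X]} {x : L} (hx : 2 ≤ R.rootMultiplicity x) :
    R.roots.toFinset.card < R.natDegree := by
  have h_dup : ¬R.roots.Nodup := by
    rw [Multiset.nodup_iff_count_le_one]
    intro h
    have := h x
    rw [count_roots] at this
    omega
  refine lt_of_lt_of_le (lt_of_le_of_ne (Multiset.toFinset_card_le _) ?_) (card_roots' R)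
  exact fun h => h_dup (Multiset.toFinset_card_eq_card_iff_nodup.mp h)

theorem card_fiber_ratAct_le (hf : IsCoprime p q) (hdeg : max p.natDegree q.natDegree = d)
    (hd : 1 ≤ d) (y : P1 L) : Nat.card {x // ratAct p q L x = y} ≤ d := by
  have h_roots := (Multiset.toFinset_card_le (fibPoly p q L y).roots).trans (card_roots' _)
  rw [card_fiber_ratAct hf hdeg hd]
  split_ifs with h
  · have := natDegree_fibPoly_lt hf hdeg hd h
    omega
  · have := natDegree_fibPoly_le (L := L) hdeg y
    omega

theorem card_fiber_ratAct_pos [IsAlgClosed L] (hf : IsCoprime p q)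
    (hdeg : max p.natDegree q.natDegree = d) (hd : 1 ≤ d) (y : P1 L) :
    0 < Nat.card {x // ratAct p q L x = y} := by
  rw [card_fiber_ratAct hf hdeg hd]
  split_ifs with h
  · omega
  have h_pos : 0 < (fibPoly p q L y).natDegree := (le_natDegree_of_ne_zero h).trans_lt' hd
  obtain ⟨z, hz⟩ := IsAlgClosed.exists_root _ (natDegree_pos_iff_degree_pos.mp h_pos).ne'
  have : z ∈ (fibPoly p q L y).roots.toFinset := by
    simpa [fibPoly_ne_zero hf hdeg hd y] using hz
  exact Nat.add_pos_left (Finset.card_pos.mpr ⟨z, this⟩) _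

theorem multAt_some (x : L) :
    multAt p q L d (some x) = (fibPoly p q L (ratAct p q L (some x))).rootMultiplicity x := by
  cases h : ratAct p q L (some x) <;> simp only [multAt, h, fibPoly]

theorem multAt_none : multAt p q L d none = d - (fibPoly p q L (ratAct p q L none)).natDegree := by
  cases h : ratAct p q L none <;> simp only [multAt, h, fibPoly, natDegree_map]

theorem card_fiber_ratAct_lt (hf : IsCoprime p q) (hdeg : max p.natDegree q.natDegree = d)
    (hd : 1 ≤ d) {γ : P1 L} (hγ : 2 ≤ multAt p q L d γ) :
    Nat.card {x // ratAct p q L x = ratAct p q L γ} < d := by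
  rw [card_fiber_ratAct hf hdeg hd]
  cases γ with
  | none =>
    rw [multAt_none] at hγ
    have h_roots := (Multiset.toFinset_card_le
      (fibPoly p q L (ratAct p q L none)).roots).trans (card_roots' _)
    rw [if_pos ((ratAct_none_eq_iff hdeg hd).mp rfl)]
    omega
  | some x =>
    rw [multAt_some] at hγ
    have h_roots := card_roots_toFinset_lt_natDegree hγ
    split_ifs with h
    · have := natDegree_fibPoly_lt hf hdeg hd h
      omega
    · have := natDegree_fibPoly_le (L := L) hdeg (ratAct p q L (some x))
      omega

theorem galP1_ratAct (σ : Kbar K ≃ₐ[K] Kbar K) (x : P1 (Kbar K)) :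
    galP1 σ (ratAct p q (Kbar K) x) = ratAct p q (Kbar K) (galP1 σ x) := by
  cases x with
  | none =>
    simp only [galP1, Option.map_none, ratAct]
    split_ifs <;> simp
  | some a =>
    simp only [galP1, Option.map_some, ratAct, aeval_algHom_apply, map_eq_zero_iff _ σ.injective]
    split_ifs <;> simp

end RationalMap

theorem arboreal_postcritical_not_large_general {K : Type*} [Field K] {d : ℕ}
    (hd : 2 ≤ d) (p q : Polynomial K) (hf : IsCoprime p q)
    (hdeg : max p.natDegree q.natDegree = d) (α : P1 K) (m : ℕ) (hm : 1 ≤ m)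
    (hcrit : ∃ γ : P1 (Kbar K), 2 ≤ multAt p q (Kbar K) d γ ∧
      (ratAct p q (Kbar K))^[m] γ = P1K α) :
    dimUpper d (arbGal (K := K) galP1 ⊥ (ratAct p q (Kbar K)) (P1K α)) ≤
        1 - ((d : ℝ) ^ m)⁻¹ ∧
      dimUpper d (arbGal (K := K) galP1 ⊥ (ratAct p q (Kbar K)) (P1K α)) < 1 := by
  obtain ⟨γ, hγ, hγα⟩ := hcrit
  obtain ⟨k, rfl⟩ : ∃ k, m = k + 1 := ⟨m - 1, by omega⟩
  have hd1 : 1 ≤ d := by omega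
  have h_le : dimUpper d (arbGal (K := K) galP1 ⊥ (ratAct p q (Kbar K)) (P1K α)) ≤
      1 - ((d : ℝ) ^ (k + 1))⁻¹ :=
    dimUpper_preimageTree_le _ _ hd (fun _ => isTreeAut_of_mem_arbGal _ _ galP1_ratAct)
      (card_fiber_ratAct_pos hf hdeg hd1) (card_fiber_ratAct_le hf hdeg hd1) hγα
      (card_fiber_ratAct_lt hf hdeg hd1 hγ)
  refine ⟨h_le, h_le.trans_lt ?_⟩
  have : (0 : ℝ) < d := by exact_mod_cast (by omega : 0 < d)
  have : 0 < ((d : ℝ) ^ (k + 1))⁻¹ := by positivity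
  linarith

theorem arboreal_postcritical_not_large {K : Type*} [Field K] [NumberField K] {d : ℕ}
    (hd : 2 ≤ d) (p q : Polynomial K) (hf : IsCoprime p q)
    (hdeg : max p.natDegree q.natDegree = d) (α : P1 K) (m : ℕ) (hm : 1 ≤ m)
    (hcrit : ∃ γ : P1 (Kbar K), 2 ≤ multAt p q (Kbar K) d γ ∧
      (ratAct p q (Kbar K))^[m] γ = P1K α) :
    dimUpper d (arbGal (K := K) galP1 ⊥ (ratAct p q (Kbar K)) (P1K α)) ≤
        1 - ((d : ℝ) ^ m)⁻¹ ∧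
      dimUpper d (arbGal (K := K) galP1 ⊥ (ratAct p q (Kbar K)) (P1K α)) < 1 :=
  arboreal_postcritical_not_large_general hd p q hf hdeg α m hm hcrit
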